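/- arXiv:2001.08537 — 2 statements merged into one kernel-verified Lean document; each statement's English description precedes it below -/
import Mathlib

section
/- Let V be a d×n real matrix with columns v_1,…,v_n, let C = VᵀV, let s be an integer with 1 ≤ s ≤ d, and let x̂ ∈ [0,1]ⁿ with ∑_{i=1}^n x̂_i = s. Let λ₁ ≥ ⋯ ≥ λ_d ≥ 0 be the eigenvalues of X̂ = ∑_{i=1}^n x̂_i v_i v_iᵀ and let k = k(λ,s). Then D := ∑_{S ⊆ {1,…,n}, |S|=s} ∏_{i∈S} x̂_i > 0, and (1/D) · ∑_{S ⊆ {1,…,n}, |S|=s} (∏_{i∈S} x̂_i) · det(C_{S,S}) ≥ ((s/n)^s · C(n,s))^{-1} · (∏_{i=1}^k λ_i) · ((1/(s−k)) ∑_{i=k+1}^d λ_i)^{s−k}. (This is the expected value of det(C_{S̃,S̃}) when a size-s set S̃ is sampled with probability proportional to ∏_{i∈S̃} x̂_i; it yields the (s·log s + log C(n,s) − s·log n + α)-approximation bound of the sampling algorithm for MESP.) -/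
open Matrix Finset

noncomputable section

/-- `lam` lists the eigenvalues (with multiplicity) of the real symmetric matrix `X`,
via an orthogonal spectral decomposition. -/
def IsSpectralDecomp {m : Type*} [Fintype m] [DecidableEq m]
    (X : Matrix m m ℝ) (lam : m → ℝ) : Prop :=
  ∃ Q : Matrix m m ℝ, Q * Qᵀ = 1 ∧ X = Q * Matrix.diagonal lam * Qᵀ

/-- Principal submatrix `C_{S,S}`. -/
def subSub {n : ℕ} (C : Matrix (Fin n) (Fin n) ℝ) (S : Finset (Fin n)) :
    Matrix {i // i ∈ S} {i // i ∈ S} ℝ :=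
  Matrix.of fun a b => C a.1 b.1

/-- The value `λ_{i+1}` (1-based), i.e. the coordinate of `lam` of 0-based index `i`;
`0` when out of range. -/
def extVal {d : ℕ} (lam : Fin d → ℝ) : ℕ → ℝ :=
  fun i => if h : i < d then lam ⟨i, h⟩ else 0

/-- `∑_{i=k+1}^d λ_i` (1-based), i.e. the sum of the coordinates of 0-based index `≥ k`. -/
def tailSum {d : ℕ} (lam : Fin d → ℝ) (k : ℕ) : ℝ :=
  ∑ i ∈ Finset.univ.filter (fun i : Fin d => k ≤ (i : ℕ)), lam i

/-- `k = k(λ, s)`: an integer `0 ≤ k < s` with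
`λ_k > (1/(s-k)) ∑_{i=k+1}^d λ_i ≥ λ_{k+1}`, with the convention `λ₀ = +∞`. -/
def IsKIndex {d : ℕ} (lam : Fin d → ℝ) (s k : ℕ) : Prop :=
  k < s ∧ extVal lam k ≤ tailSum lam k / ((s : ℝ) - k) ∧
    (k = 0 ∨ tailSum lam k / ((s : ℝ) - k) < extVal lam (k - 1))

/-- `P` is the Moore–Penrose pseudoinverse of `X`. -/
def IsPseudoInv {d : ℕ} (X P : Matrix (Fin d) (Fin d) ℝ) : Prop :=
  X * P * X = X ∧ P * X * P = P ∧ (X * P)ᵀ = X * P ∧ (P * X)ᵀ = P * X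

/-!
Write `X̂ = V diag(x) Vᵀ`. Since `det (1 + t A B) = det (1 + t B A)`, the sums of the
`s × s` principal minors of `diag(x) Vᵀ V` and of `X̂ = V (diag(x) Vᵀ)` agree. The first sum is
`∑_{|S| = s} (∏_{i ∈ S} x_i) det C_{S,S}`, and the second is `e_s(λ)`, because `X̂` is
orthogonally similar to `diag λ`. So the expectation equals `e_s(λ) / e_s(x)`.

The normaliser `e_s(x)` is at most `C(n,s) (s/n)^s` by Maclaurin's inequality and at least `1`
because `x ∈ [0,1]ⁿ` sums to `s`. For the numerator,
`e_s(λ) ≥ λ_1 ⋯ λ_k · e_{s-k}(λ_{k+1}, …, λ_d)`. By the choice of `k`, the tail values lie in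
`[0, c]`, where `c = (1/(s-k)) ∑_{i>k} λ_i`, and they sum to `(s-k) c`, so `e_{s-k}` of them is
at least `c^{s-k}`.

Both bounds on elementary symmetric functions follow by induction on the multiset of values, by
peeling off one value `a` using `e_{r+1}(a, t) = e_{r+1}(t) + a e_r(t)`. For Maclaurin, the
inductive bound is the tangent line, at `a = mean t`, of the convex right-hand side as a function of
`a`. For the lower bound, the induction carries the clamped estimate
`min 1 (∑ y - r + 1) ≤ e_r(y)` for `y ∈ [0,1]`.
-/

theorem pow_add_mul_sub_le_pow {m M : ℝ} (hm : 0 ≤ m) (hM : 0 ≤ M) (r : ℕ) :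
    m ^ (r + 1) + (r + 1) * m ^ r * (M - m) ≤ M ^ (r + 1) := by
  rcases hm.eq_or_lt with rfl | hm
  · cases r <;> simp [hM]
  · have := one_add_mul_sub_le_pow (by linarith [div_nonneg hM hm.le] : (-1 : ℝ) ≤ M / m) (r + 1)
    have hpow : M ^ (r + 1) = m ^ (r + 1) * (M / m) ^ (r + 1) := by
      rw [← mul_pow, mul_div_cancel₀ _ hm.ne']
    rw [hpow]
    push_cast at this
    calc m ^ (r + 1) + (r + 1) * m ^ r * (M - m)
        = m ^ (r + 1) * (1 + (r + 1) * (M / m - 1)) := by field_simp; ring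
      _ ≤ _ := by gcongr

namespace Multiset

section CommSemiring

variable {R : Type*} [CommSemiring R]

@[simp]
theorem esymm_zero_right (s : Multiset R) : s.esymm 0 = 1 := by
  simp [esymm]

@[simp]
theorem esymm_zero_left (r : ℕ) : (0 : Multiset R).esymm (r + 1) = 0 := by
  simp [esymm, powersetCard_zero_right]

theorem esymm_cons_succ (a : R) (s : Multiset R) (r : ℕ) :
    (a ::ₘ s).esymm (r + 1) = s.esymm (r + 1) + a * s.esymm r := by
  simp [esymm, map_map, sum_map_mul_left]

end CommSemiring

variable {s t : Multiset ℝ}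

theorem esymm_nonneg (hs : ∀ y ∈ s, 0 ≤ y) (r : ℕ) : 0 ≤ s.esymm r :=
  sum_nonneg fun _ hp => by
    obtain ⟨u, hu, rfl⟩ := mem_map.mp hp
    exact prod_nonneg fun y hy => hs y (mem_of_le (mem_powersetCard.mp hu).1 hy)

theorem esymm_le_choose_mul_mean_pow (hs : ∀ y ∈ s, 0 ≤ y) (r : ℕ) :
    s.esymm r ≤ (card s).choose r * (s.sum / card s) ^ r := by
  induction s using Multiset.induction_on generalizing r with
  | empty => cases r <;> simp
  | cons a t ih =>
    have ha : 0 ≤ a := hs a (mem_cons_self a t)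
    have ht : ∀ y ∈ t, 0 ≤ y := fun y hy => hs y (mem_cons_of_mem hy)
    cases r with
    | zero => simp
    | succ r =>
      set N := card t
      set m := t.sum / N
      have hm : 0 ≤ m := div_nonneg (sum_nonneg ht) N.cast_nonneg
      have hsum : t.sum = N * m := by
        rcases (Nat.zero_le N).eq_or_lt with hN | hN
        · rw [eq_comm, card_eq_zero] at hN
          simp [hN, N]
        · simp only [m]; field_simp
      set M := (a ::ₘ t).sum / ((card (a ::ₘ t) : ℕ) : ℝ)
      have hM0 : 0 ≤ M := div_nonneg (sum_nonneg hs) (Nat.cast_nonneg _)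
      have hM : (N + 1) * M = a + N * m := by
        simp only [M, card_cons, sum_cons, Nat.cast_add, Nat.cast_one, hsum, N]
        field_simp
      have habsorb : ((N + 1).choose (r + 1) : ℝ) * (r + 1) = (N + 1) * N.choose r := by
        exact_mod_cast (Nat.add_one_mul_choose_eq N r).symm
      have hpascal : ((N + 1).choose (r + 1) : ℝ) = N.choose r + N.choose (r + 1) := by
        exact_mod_cast Nat.choose_succ_succ N r
      rw [esymm_cons_succ, card_cons]
      clear_value m M
      calc t.esymm (r + 1) + a * t.esymm r
          ≤ N.choose (r + 1) * m ^ (r + 1) + a * (N.choose r * m ^ r) :=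
            add_le_add (ih ht _) (mul_le_mul_of_nonneg_left (ih ht r) ha)
        _ = (N + 1).choose (r + 1) * (m ^ (r + 1) + (r + 1) * m ^ r * (M - m)) := by
            linear_combination -m ^ (r + 1) * hpascal - m ^ r * (M - m) * habsorb
              - N.choose r * m ^ r * hM
        _ ≤ (N + 1).choose (r + 1) * M ^ (r + 1) := by
            gcongr
            exact pow_add_mul_sub_le_pow hm hM0 r

theorem min_one_le_esymm (hs : ∀ y ∈ s, 0 ≤ y ∧ y ≤ 1) (r : ℕ) :
    min 1 (s.sum - r + 1) ≤ s.esymm r := by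
  induction s using Multiset.induction_on generalizing r with
  | empty => cases r <;> simp
  | cons a t ih =>
    obtain ⟨ha0, ha1⟩ := hs a (mem_cons_self a t)
    have ht : ∀ y ∈ t, 0 ≤ y ∧ y ≤ 1 := fun y hy => hs y (mem_cons_of_mem hy)
    cases r with
    | zero => simp
    | succ r =>
      have hE₁ := esymm_nonneg (fun y hy => (ht y hy).1) (r + 1)
      have h₁ : min 1 (t.sum - r) ≤ t.esymm (r + 1) := by
        convert ih ht (r + 1) using 2; push_cast; ring
      have h₀ := ih ht r
      have hsum : (a ::ₘ t).sum - ((r + 1 : ℕ) : ℝ) + 1 = a + (t.sum - r) := by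
        rw [sum_cons]; push_cast; ring
      rw [esymm_cons_succ, hsum]
      rcases le_total 0 (t.sum - r) with hT | hT
      · have hE₀ : 1 ≤ t.esymm r := by rwa [min_eq_left (by linarith)] at h₀
        calc min 1 (a + (t.sum - r)) ≤ a + min 1 (t.sum - r) := by
              rw [← min_add_add_left]; exact min_le_min (by linarith) le_rfl
          _ ≤ t.esymm (r + 1) + a * t.esymm r := by nlinarith
      · have hE₀ : t.sum - r + 1 ≤ t.esymm r := by rwa [min_eq_right (by linarith)] at h₀
        calc min 1 (a + (t.sum - r)) ≤ a + (t.sum - r) := min_le_right _ _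
          _ ≤ a * (t.sum - r + 1) := by nlinarith
          _ ≤ t.esymm (r + 1) + a * t.esymm r := by nlinarith

theorem pow_le_esymm {c : ℝ} (hc : 0 ≤ c) (hs : ∀ y ∈ s, 0 ≤ y ∧ y ≤ c) {r : ℕ}
    (hsum : s.sum = r * c) : c ^ r ≤ s.esymm r := by
  rcases hc.eq_or_lt with rfl | hc
  · cases r with
    | zero => simp
    | succ r => simpa using esymm_nonneg (fun y hy => (hs y hy).1) (r + 1)
  set u := s.map (· * c⁻¹)
  have hu : ∀ y ∈ u, 0 ≤ y ∧ y ≤ 1 := by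
    simp only [u, mem_map]
    rintro _ ⟨y, hy, rfl⟩
    obtain ⟨hy0, hyc⟩ := hs y hy
    exact ⟨by positivity, by rwa [← div_eq_mul_inv, div_le_one hc]⟩
  have hsum' : u.sum = r := by
    rw [sum_map_mul_right, map_id', hsum, mul_inv_cancel_right₀ hc.ne']
  have hscale : c ^ r * u.esymm r = s.esymm r := by
    rw [← smul_eq_mul, pow_smul_esymm, map_map]
    refine congrArg (esymm · r) ((map_congr rfl fun y _ => ?_).trans (map_id' s))
    simp only [Function.comp_apply, smul_eq_mul]
    field_simp
  simpa [hsum', ← hscale] using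
    mul_le_mul_of_nonneg_left (min_one_le_esymm hu r) (pow_nonneg hc.le r)

theorem prod_mul_esymm_le_esymm_add (hs : ∀ y ∈ s, 0 ≤ y) (ht : ∀ y ∈ t, 0 ≤ y) (r : ℕ) :
    s.prod * t.esymm r ≤ (s + t).esymm (card s + r) := by
  induction s using Multiset.induction_on with
  | empty => simp
  | cons a s ih =>
    have ha : 0 ≤ a := hs a (mem_cons_self a s)
    have hs' : ∀ y ∈ s, 0 ≤ y := fun y hy => hs y (mem_cons_of_mem hy)
    have hst : ∀ y ∈ s + t, 0 ≤ y := by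
      simp only [mem_add]; rintro y (hy | hy) <;> [exact hs' y hy; exact ht y hy]
    rw [prod_cons, cons_add, card_cons, add_right_comm, esymm_cons_succ, mul_assoc]
    nlinarith [ih hs', esymm_nonneg hst (card s + r + 1)]

end Multiset

namespace Matrix

theorem sum_smul_vecMulVec_eq_mul_diagonal_mul_transpose {m n R : Type*} [Fintype n]
    [DecidableEq n] [CommSemiring R]
    (V : Matrix m n R) (x : n → R) :
    ∑ i, x i • vecMulVec (fun a => V a i) (fun a => V a i) = V * diagonal x * Vᵀ := by
  ext a b
  rw [mul_apply]
  simp only [sum_apply, smul_apply, vecMulVec_apply, smul_eq_mul, mul_diagonal, transpose_apply]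
  exact sum_congr rfl fun i _ => by ring

variable {m n R : Type*} [Fintype m] [Fintype n] [DecidableEq m] [DecidableEq n] [CommRing R]

theorem sum_det_submatrix_mul_comm (A : Matrix m n R) (B : Matrix n m R) (k : ℕ) :
    ∑ S ∈ univ.powersetCard k, ((A * B).submatrix (Subtype.val : S → m) Subtype.val).det =
      ∑ T ∈ univ.powersetCard k, ((B * A).submatrix (Subtype.val : T → n) Subtype.val).det := by
  rw [← coeff_det_one_add_X_smul_eq_sum_minors, ← coeff_det_one_add_X_smul_eq_sum_minors,
    Matrix.map_mul, Matrix.map_mul, ← smul_mul, det_one_add_mul_comm, Matrix.mul_smul]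

theorem sum_det_submatrix_diagonal (d : n → R) (k : ℕ) :
    ∑ S ∈ univ.powersetCard k, ((diagonal d).submatrix (Subtype.val : S → n) Subtype.val).det =
      ∑ S ∈ univ.powersetCard k, ∏ i ∈ S, d i := by
  refine sum_congr rfl fun S _ => ?_
  rw [submatrix_diagonal _ _ Subtype.val_injective, det_diagonal]
  exact prod_coe_sort S d

theorem det_submatrix_diagonal_mul {l : Type*} [Fintype l] [DecidableEq l]
    (d : n → R) (M : Matrix n n R) (e : l → n) :
    ((diagonal d * M).submatrix e e).det = (∏ i, d (e i)) * (M.submatrix e e).det := by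
  have : (diagonal d * M).submatrix e e = diagonal (d ∘ e) * M.submatrix e e := by
    ext i j; simp [diagonal_mul]
  rw [this, det_mul, det_diagonal]
  rfl

end Matrix

theorem IsSpectralDecomp.sum_det_submatrix {m : Type*} [Fintype m] [DecidableEq m]
    {X : Matrix m m ℝ} {lam : m → ℝ} (h : IsSpectralDecomp X lam) (k : ℕ) :
    ∑ T ∈ univ.powersetCard k, (X.submatrix (Subtype.val : T → m) Subtype.val).det =
      ∑ T ∈ univ.powersetCard k, ∏ i ∈ T, lam i := by
  obtain ⟨Q, hQ, rfl⟩ := h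
  rw [sum_det_submatrix_mul_comm, ← Matrix.mul_assoc, mul_eq_one_comm.mp hQ, Matrix.one_mul,
    sum_det_submatrix_diagonal]

theorem subSub_eq_submatrix {n : ℕ} (C : Matrix (Fin n) (Fin n) ℝ) (S : Finset (Fin n)) :
    subSub C S = C.submatrix Subtype.val Subtype.val :=
  rfl

theorem prod_mul_pow_le_sum_prod {d s k : ℕ} {lam : Fin d → ℝ} (hsort : Antitone lam)
    (hnn : ∀ i, 0 ≤ lam i) (hsd : s ≤ d) (hks : k < s)
    (hk : extVal lam k ≤ tailSum lam k / ((s : ℝ) - k)) :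
    (∏ i ∈ univ.filter (fun i : Fin d => (i : ℕ) < k), lam i) *
        (tailSum lam k / ((s : ℝ) - k)) ^ (s - k) ≤
      ∑ T ∈ univ.powersetCard s, ∏ i ∈ T, lam i := by
  set K := univ.filter (fun i : Fin d => (i : ℕ) < k)
  set B := univ.filter (fun i : Fin d => k ≤ (i : ℕ))
  set c := tailSum lam k / ((s : ℝ) - k)
  have hkd : k < d := hks.trans_le hsd
  have hK : #K = k := by simp [K, Fin.card_filter_val_lt, hkd.le]
  have hKB : K.val.map lam + B.val.map lam = univ.val.map lam := by
    rw [← Multiset.map_add]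
    congr 1
    simpa [K, B, not_lt] using Multiset.filter_add_not (fun i : Fin d => (i : ℕ) < k) univ.val
  have hsk : (0 : ℝ) < s - k := by simp [hks]
  have hc : 0 ≤ c := div_nonneg (sum_nonneg fun i _ => hnn i) hsk.le
  have hB : ∀ y ∈ B.val.map lam, 0 ≤ y ∧ y ≤ c := by
    simp only [Multiset.mem_map, mem_val, B, mem_filter, mem_univ, true_and]
    rintro _ ⟨i, hi, rfl⟩
    refine ⟨hnn i, le_trans (hsort (show (⟨k, hkd⟩ : Fin d) ≤ i from hi)) ?_⟩
    simpa [extVal, hkd] using hk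
  have hBsum : (B.val.map lam).sum = ((s - k : ℕ) : ℝ) * c := by
    rw [Nat.cast_sub hks.le, mul_div_cancel₀ _ hsk.ne']
    rfl
  calc (∏ i ∈ K, lam i) * c ^ (s - k)
      ≤ (K.val.map lam).prod * (B.val.map lam).esymm (s - k) :=
        mul_le_mul_of_nonneg_left (Multiset.pow_le_esymm hc hB hBsum)
          (prod_nonneg fun i _ => hnn i)
    _ ≤ (K.val.map lam + B.val.map lam).esymm (Multiset.card (K.val.map lam) + (s - k)) :=
        Multiset.prod_mul_esymm_le_esymm_add (by simp [hnn]) (by simp [hnn]) _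
    _ = ∑ T ∈ univ.powersetCard s, ∏ i ∈ T, lam i := by
        rw [hKB, Multiset.card_map, card_val, hK, Nat.add_sub_cancel' hks.le,
          Finset.esymm_map_val]

theorem sum_prod_mul_det_subSub_eq {d n : ℕ} (V : Matrix (Fin d) (Fin n) ℝ) (x : Fin n → ℝ)
    {lam : Fin d → ℝ}
    (hdecomp : IsSpectralDecomp (∑ i, x i • vecMulVec (fun a => V a i) (fun a => V a i)) lam)
    (s : ℕ) :
    ∑ S ∈ univ.powersetCard s, (∏ i ∈ S, x i) * (subSub (Vᵀ * V) S).det =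
      ∑ T ∈ univ.powersetCard s, ∏ i ∈ T, lam i := by
  rw [sum_smul_vecMulVec_eq_mul_diagonal_mul_transpose, Matrix.mul_assoc] at hdecomp
  calc ∑ S ∈ univ.powersetCard s, (∏ i ∈ S, x i) * (subSub (Vᵀ * V) S).det
      = ∑ S ∈ univ.powersetCard s,
          ((diagonal x * Vᵀ * V).submatrix (Subtype.val : S → Fin n) Subtype.val).det := by
        refine sum_congr rfl fun S _ => ?_
        rw [Matrix.mul_assoc, det_submatrix_diagonal_mul, subSub_eq_submatrix, prod_coe_sort]
    _ = _ := by rw [sum_det_submatrix_mul_comm, hdecomp.sum_det_submatrix]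

theorem stmt_9_general (d n s : ℕ) (hsd : s ≤ d)
    (V : Matrix (Fin d) (Fin n) ℝ)
    (x : Fin n → ℝ) (hx0 : ∀ i, 0 ≤ x i) (hx1 : ∀ i, x i ≤ 1) (hxs : ∑ i, x i = s)
    (lam : Fin d → ℝ) (hsort : Antitone lam) (hnn : ∀ i, 0 ≤ lam i)
    (hdecomp : IsSpectralDecomp
      (∑ i, x i • vecMulVec (fun a => V a i) (fun a => V a i)) lam)
    (k : ℕ) (hk : IsKIndex lam s k) :
    0 < ∑ S ∈ Finset.univ.powersetCard s, ∏ i ∈ S, x i ∧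
    (((s : ℝ) / n) ^ s * (n.choose s))⁻¹ *
        ((∏ i ∈ Finset.univ.filter (fun i : Fin d => (i : ℕ) < k), lam i)
          * (tailSum lam k / ((s : ℝ) - k)) ^ (s - k))
      ≤ (∑ S ∈ Finset.univ.powersetCard s, ∏ i ∈ S, x i)⁻¹ *
        ∑ S ∈ Finset.univ.powersetCard s,
          (∏ i ∈ S, x i) * (subSub (Vᵀ * V) S).det := by
  obtain ⟨hks, hkc, -⟩ := hk
  rw [sum_prod_mul_det_subSub_eq V x hdecomp s, ← Finset.esymm_map_val]
  have hxs' : (univ.val.map x).sum = s := hxs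
  have hD : 1 ≤ (univ.val.map x).esymm s := by
    have := Multiset.pow_le_esymm zero_le_one (s := univ.val.map x) (by simp [hx0, hx1])
      (r := s) (by rw [mul_one, hxs'])
    rwa [one_pow] at this
  have hDle : (univ.val.map x).esymm s ≤ ((s : ℝ) / n) ^ s * n.choose s := by
    have := Multiset.esymm_le_choose_mul_mean_pow (s := univ.val.map x) (by simp [hx0]) s
    rwa [Multiset.card_map, card_val, card_univ, Fintype.card_fin, hxs', mul_comm] at this
  have hG := prod_mul_pow_le_sum_prod hsort hnn hsd hks hkc
  have he : 0 ≤ ∑ T ∈ univ.powersetCard s, ∏ i ∈ T, lam i :=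
    sum_nonneg fun T _ => prod_nonneg fun i _ => hnn i
  refine ⟨by linarith, ?_⟩
  calc _ ≤ (((s : ℝ) / n) ^ s * n.choose s)⁻¹ * ∑ T ∈ univ.powersetCard s, ∏ i ∈ T, lam i := by
        gcongr
    _ ≤ _ := by gcongr

/-- Sampling a size-`s` set with probability proportional to `∏_{i∈S} x̂ᵢ`
is well defined (`D > 0`) and the expected subdeterminant satisfies
`E[det(C_{S̃,S̃})] ≥ ((s/n)^s C(n,s))⁻¹ exp(Γ_s(∑ x̂ᵢ vᵢvᵢᵀ))`. -/
theorem stmt_9 (d n s : ℕ) (hs1 : 1 ≤ s) (hsd : s ≤ d)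
    (V : Matrix (Fin d) (Fin n) ℝ)
    (x : Fin n → ℝ) (hx0 : ∀ i, 0 ≤ x i) (hx1 : ∀ i, x i ≤ 1) (hxs : ∑ i, x i = s)
    (lam : Fin d → ℝ) (hsort : Antitone lam) (hnn : ∀ i, 0 ≤ lam i)
    (hdecomp : IsSpectralDecomp
      (∑ i, x i • vecMulVec (fun a => V a i) (fun a => V a i)) lam)
    (k : ℕ) (hk : IsKIndex lam s k) :
    0 < ∑ S ∈ Finset.univ.powersetCard s, ∏ i ∈ S, x i ∧
    (((s : ℝ) / n) ^ s * (n.choose s))⁻¹ *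
        ((∏ i ∈ Finset.univ.filter (fun i : Fin d => (i : ℕ) < k), lam i)
          * (tailSum lam k / ((s : ℝ) - k)) ^ (s - k))
      ≤ (∑ S ∈ Finset.univ.powersetCard s, ∏ i ∈ S, x i)⁻¹ *
        ∑ S ∈ Finset.univ.powersetCard s,
          (∏ i ∈ S, x i) * (subSub (Vᵀ * V) S).det :=
  stmt_9_general d n s hsd V x hx0 hx1 hxs lam hsort hnn hdecomp k hk
end
end

section
/- Let V be a d×n real matrix with columns v_1,…,v_n, s an integer with 1 ≤ s ≤ d, and Ŝ ⊆ {1,…,n} with |Ŝ| = s such that {v_ℓ}_{ℓ∈Ŝ} are linearly independent. Let X = ∑_{ℓ∈Ŝ} v_ℓ v_ℓᵀ and let P be the Moore–Penrose pseudoinverse of X. Suppose Ŝ is locally optimal for MESP: for every i ∈ Ŝ and j ∈ {1,…,n}∖Ŝ, the determinant of the Gram matrix of {v_ℓ}_{ℓ ∈ Ŝ∪{j}∖{i}} is at most the determinant of the Gram matrix of {v_ℓ}_{ℓ∈Ŝ}. Then for every i ∈ Ŝ and j ∈ {1,…,n}∖Ŝ: 1 ≥ (v_iᵀ P P v_i)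 · v_jᵀ (I_d − P X) v_j + (v_jᵀ P v_i)². -/
open Matrix Finset

noncomputable section

/-!
Let `B` be the matrix with the columns `v_ℓ`, `ℓ ∈ Ŝ`, and `A = BᵀB`, which is positive definite
because these columns are independent. Then `X = BBᵀ` and `P = BA⁻¹A⁻¹Bᵀ`, so with `b = Bᵀvⱼ` the
three quantities of the claim are `(A⁻¹)ᵢᵢ`, `vⱼᵀvⱼ - bᵀA⁻¹b` and `(A⁻¹b)ᵢ`. Exchanging `i` for `j`
replaces the column `vᵢ` of `B` by `vⱼ`. This is a rank-one change of `B`, hence a symmetric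
rank-two change of `A`, and the matrix determinant lemma turns the new Gram determinant into
`det A · ((A⁻¹b)ᵢ² + (A⁻¹)ᵢᵢ (vⱼᵀvⱼ - bᵀA⁻¹b))`. Local optimality bounds it by `det A`.
-/

namespace IsPseudoInv

variable {d : ℕ} {X P Q : Matrix (Fin d) (Fin d) ℝ}

theorem transpose (hP : IsPseudoInv X P) : IsPseudoInv Xᵀ Pᵀ := by
  obtain ⟨h₁, h₂, h₃, h₄⟩ := hP
  refine ⟨?_, ?_, ?_, ?_⟩
  · rw [← transpose_mul, ← transpose_mul, ← Matrix.mul_assoc, h₁]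
  · rw [← transpose_mul, ← transpose_mul, ← Matrix.mul_assoc, h₂]
  · rw [← transpose_mul, h₄, h₄]
  · rw [← transpose_mul, h₃, h₃]

theorem mul_eq_mul (hP : IsPseudoInv X P) (hQ : IsPseudoInv X Q) : P * X = Q * X :=
  calc P * X = P * (X * Q * X) := by rw [hQ.1]
    _ = (Q * X * (P * X))ᵀ := by
      rw [transpose_mul, hP.2.2.2, hQ.2.2.2]; simp only [Matrix.mul_assoc]
    _ = Q * X := by rw [Matrix.mul_assoc, ← Matrix.mul_assoc X, hP.1, hQ.2.2.2]

theorem unique (hP : IsPseudoInv X P) (hQ : IsPseudoInv X Q) : P = Q := by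
  have hXP : X * P = X * Q := by
    simpa [← transpose_mul] using hP.transpose.mul_eq_mul hQ.transpose
  calc P = P * X * P := hP.2.1.symm
    _ = Q * X * Q := by rw [hP.mul_eq_mul hQ, Matrix.mul_assoc, hXP, ← Matrix.mul_assoc]
    _ = Q := hQ.2.1

end IsPseudoInv

theorem updateCol_eq_add_vecMulVec {k m R : Type*} [Fintype m] [DecidableEq m] [Ring R]
    (B : Matrix k m R) (i : m) (x : k → R) :
    B.updateCol i x = B + vecMulVec (x - B *ᵥ Pi.single i 1) (Pi.single i 1) := by
  ext a l
  rcases eq_or_ne l i with rfl | hl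
  · simp [vecMulVec_apply]
  · simp [vecMulVec_apply, hl]

theorem transpose_mul_self_add_vecMulVec {k m R : Type*} [Fintype k] [CommSemiring R]
    (B : Matrix k m R) (w : k → R) (e : m → R) :
    (B + vecMulVec w e)ᵀ * (B + vecMulVec w e) =
      Bᵀ * B + (vecMulVec e (Bᵀ *ᵥ w) + vecMulVec (Bᵀ *ᵥ w) e + (w ⬝ᵥ w) • vecMulVec e e) := by
  rw [transpose_add, transpose_vecMulVec, Matrix.add_mul, Matrix.mul_add, Matrix.mul_add,
    mul_vecMulVec, vecMulVec_mul, vecMulVec_mul_vecMulVec, ← mulVec_transpose, vecMulVec_smul]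
  abel

section DeterminantLemma

variable {k m R : Type*} [Fintype k] [Fintype m] [DecidableEq m] [CommRing R]

theorem det_add_symm_rank_two {A : Matrix m m R} (hA : IsUnit A.det) (hAt : Aᵀ = A)
    (e u : m → R) (β : R) :
    (A + (vecMulVec e u + vecMulVec u e + β • vecMulVec e e)).det =
      A.det * ((1 + u ⬝ᵥ A⁻¹ *ᵥ e) ^ 2 + (e ⬝ᵥ A⁻¹ *ᵥ e) * (β - u ⬝ᵥ A⁻¹ *ᵥ u)) := by
  have hsymm : e ⬝ᵥ A⁻¹ *ᵥ u = u ⬝ᵥ A⁻¹ *ᵥ e := by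
    rw [dotProduct_mulVec, ← mulVec_transpose, transpose_nonsing_inv, hAt, dotProduct_comm]
  have hUV : vecMulVec e u + vecMulVec u e + β • vecMulVec e e =
      (of ![e, u])ᵀ * of ![u + β • e, e] := by
    ext a b
    simp only [Matrix.add_apply, vecMulVec_apply, Matrix.smul_apply, smul_eq_mul, mul_apply,
      transpose_apply, of_apply, cons_val', cons_val_fin_one, Pi.add_apply, Pi.smul_apply,
      Fin.sum_univ_two, cons_val_zero, cons_val_one]
    ring
  have hentry (x : m → R) (l : Fin 2) :
      (x ᵥ* (A⁻¹ * (of ![e, u])ᵀ)) l = x ⬝ᵥ A⁻¹ *ᵥ ![e, u] l := by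
    rw [← vecMul_vecMul, dotProduct_mulVec]; rfl
  rw [hUV, det_add_mul _ _ hA, det_fin_two]
  simp only [cons_mul, Matrix.empty_mul, Equiv.symm_apply_apply, vecMul_vecMul,
    Matrix.add_apply, one_apply_eq, of_apply, cons_val', hentry, cons_val_zero, add_dotProduct,
    smul_dotProduct, smul_eq_mul, cons_val_fin_one, cons_val_one, hsymm, ne_eq, zero_ne_one,
    not_false_eq_true, one_apply_ne, zero_add, one_ne_zero]
  ring

theorem det_transpose_mul_self_updateCol (B : Matrix k m R) (hB : IsUnit (Bᵀ * B).det)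
    (i : m) (x : k → R) :
    ((B.updateCol i x)ᵀ * B.updateCol i x).det =
      (Bᵀ * B).det * (((Bᵀ *ᵥ x) ⬝ᵥ (Bᵀ * B)⁻¹ *ᵥ Pi.single i 1) ^ 2 +
        (Pi.single i 1 ⬝ᵥ (Bᵀ * B)⁻¹ *ᵥ Pi.single i 1) *
          (x ⬝ᵥ x - (Bᵀ *ᵥ x) ⬝ᵥ (Bᵀ * B)⁻¹ *ᵥ (Bᵀ *ᵥ x))) := by
  set A := Bᵀ * B with hA
  set e : m → R := Pi.single i 1
  set b := Bᵀ *ᵥ x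
  set w := x - B *ᵥ e
  set u := Bᵀ *ᵥ w
  have hAt : Aᵀ = A := by rw [hA, transpose_mul, transpose_transpose]
  have hAG (v : m → R) : A *ᵥ (A⁻¹ *ᵥ v) = v := by
    rw [mulVec_mulVec, mul_nonsing_inv A hB, one_mulVec]
  have hGA (v : m → R) : A⁻¹ *ᵥ (A *ᵥ v) = v := by
    rw [mulVec_mulVec, nonsing_inv_mul A hB, one_mulVec]
  have hBdot (y : k → R) (v : m → R) : y ⬝ᵥ B *ᵥ v = (Bᵀ *ᵥ y) ⬝ᵥ v := by
    rw [dotProduct_mulVec, mulVec_transpose]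
  have hAdot (v y : m → R) : (A *ᵥ v) ⬝ᵥ y = v ⬝ᵥ A *ᵥ y := by
    rw [dotProduct_mulVec v, ← mulVec_transpose, hAt]
  have hu : u = b - A *ᵥ e := by
    change Bᵀ *ᵥ (x - B *ᵥ e) = _
    rw [mulVec_sub, mulVec_mulVec]
  have hee : e ⬝ᵥ e = 1 := by simp [e]
  have hww : w ⬝ᵥ w = x ⬝ᵥ x - 2 * (b ⬝ᵥ e) + e ⬝ᵥ A *ᵥ e := by
    simp only [w, sub_dotProduct, dotProduct_sub]
    rw [dotProduct_comm (B *ᵥ e) x, hBdot x, hBdot (B *ᵥ e), mulVec_mulVec, ← hA, hAdot]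
    ring
  have hlin : 1 + u ⬝ᵥ A⁻¹ *ᵥ e = b ⬝ᵥ A⁻¹ *ᵥ e := by
    rw [hu, sub_dotProduct, hAdot, hAG, hee]
    ring
  have hquad : u ⬝ᵥ A⁻¹ *ᵥ u = b ⬝ᵥ A⁻¹ *ᵥ b - 2 * (b ⬝ᵥ e) + e ⬝ᵥ A *ᵥ e := by
    rw [hu, mulVec_sub, hGA]
    simp only [sub_dotProduct, dotProduct_sub]
    rw [hAdot, hAdot, hAG, dotProduct_comm e b]
    ring
  rw [updateCol_eq_add_vecMulVec, transpose_mul_self_add_vecMulVec, det_add_symm_rank_two hB hAt,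
    hlin, hww, hquad]
  ring

end DeterminantLemma

section PseudoInverse

variable {m : Type*} [Fintype m] [DecidableEq m] {d : ℕ}

theorem isPseudoInv_mul_transpose (B : Matrix (Fin d) m ℝ) (hB : IsUnit (Bᵀ * B).det) :
    IsPseudoInv (B * Bᵀ) (B * (Bᵀ * B)⁻¹ * (Bᵀ * B)⁻¹ * Bᵀ) := by
  set A := Bᵀ * B with hA
  have hAt : Aᵀ = A := by rw [hA, transpose_mul, transpose_transpose]
  have hG : A⁻¹ᵀ = A⁻¹ := by rw [transpose_nonsing_inv, hAt]
  have h₁ (M : Matrix m (Fin d) ℝ) : Bᵀ * (B * M) = A * M := by rw [Matrix.mul_assoc]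
  refine ⟨?_, ?_, ?_, ?_⟩ <;>
    simp only [transpose_mul, transpose_transpose, hG, Matrix.mul_assoc, h₁,
      nonsing_inv_mul_cancel_left _ _ hB, mul_nonsing_inv_cancel_left _ _ hB]

theorem pinv_bound_of_det_updateCol_le (B : Matrix (Fin d) m ℝ) (hB : (Bᵀ * B).PosDef)
    {P : Matrix (Fin d) (Fin d) ℝ} (hP : IsPseudoInv (B * Bᵀ) P) (i : m) (x : Fin d → ℝ)
    (hdet : ((B.updateCol i x)ᵀ * B.updateCol i x).det ≤ (Bᵀ * B).det) :
    (B.col i ⬝ᵥ (P * P) *ᵥ B.col i) * (x ⬝ᵥ (1 - P * (B * Bᵀ)) *ᵥ x) +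
      (x ⬝ᵥ P *ᵥ B.col i) ^ 2 ≤ 1 := by
  have hunit : IsUnit (Bᵀ * B).det := isUnit_iff_ne_zero.mpr hB.det_pos.ne'
  obtain rfl := hP.unique (isPseudoInv_mul_transpose B hunit)
  rw [det_transpose_mul_self_updateCol B hunit] at hdet
  set A := Bᵀ * B with hA
  set e : m → ℝ := Pi.single i 1
  set b := Bᵀ *ᵥ x
  have hbound : (b ⬝ᵥ A⁻¹ *ᵥ e) ^ 2 + (e ⬝ᵥ A⁻¹ *ᵥ e) * (x ⬝ᵥ x - b ⬝ᵥ A⁻¹ *ᵥ b) ≤ 1 :=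
    le_of_mul_le_mul_left (by rwa [mul_one]) hB.det_pos
  have hform (y z : Fin d → ℝ) (M : Matrix m m ℝ) :
      y ⬝ᵥ (B * M * Bᵀ) *ᵥ z = (Bᵀ *ᵥ y) ⬝ᵥ M *ᵥ (Bᵀ *ᵥ z) := by
    rw [← mulVec_mulVec, ← mulVec_mulVec, dotProduct_mulVec, ← mulVec_transpose]
  have h₁ (M : Matrix m (Fin d) ℝ) : Bᵀ * (B * M) = A * M := by rw [Matrix.mul_assoc]
  have hBe : Bᵀ *ᵥ B.col i = A *ᵥ e := by rw [← mulVec_single_one, mulVec_mulVec]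
  have hAdot (v y : m → ℝ) : (A *ᵥ v) ⬝ᵥ y = v ⬝ᵥ A *ᵥ y := by
    rw [dotProduct_mulVec v, ← mulVec_transpose, hA, transpose_mul, transpose_transpose]
  have hPP : B * A⁻¹ * A⁻¹ * Bᵀ * (B * A⁻¹ * A⁻¹ * Bᵀ) = B * (A⁻¹ * A⁻¹ * A⁻¹) * Bᵀ := by
    simp only [Matrix.mul_assoc, h₁, mul_nonsing_inv_cancel_left _ _ hunit]
  have hPX : B * A⁻¹ * A⁻¹ * Bᵀ * (B * Bᵀ) = B * A⁻¹ * Bᵀ := by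
    simp only [Matrix.mul_assoc, h₁, nonsing_inv_mul_cancel_left _ _ hunit]
  have hsq : B.col i ⬝ᵥ (B * (A⁻¹ * A⁻¹ * A⁻¹) * Bᵀ) *ᵥ B.col i = e ⬝ᵥ A⁻¹ *ᵥ e := by
    rw [hform, hBe, hAdot, mulVec_mulVec, mulVec_mulVec]
    simp only [Matrix.mul_assoc, mul_nonsing_inv_cancel_left _ _ hunit, nonsing_inv_mul _ hunit,
      Matrix.mul_one]
  have hres : x ⬝ᵥ (1 - B * A⁻¹ * Bᵀ) *ᵥ x = x ⬝ᵥ x - b ⬝ᵥ A⁻¹ *ᵥ b := by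
    rw [sub_mulVec, one_mulVec, dotProduct_sub, hform]
  have hcross : x ⬝ᵥ (B * A⁻¹ * A⁻¹ * Bᵀ) *ᵥ B.col i = b ⬝ᵥ A⁻¹ *ᵥ e := by
    rw [Matrix.mul_assoc B, hform, hBe, mulVec_mulVec, Matrix.mul_assoc, nonsing_inv_mul _ hunit,
      Matrix.mul_one]
  rw [hPP, hPX, hsq, hres, hcross]
  linarith

end PseudoInverse

section Selection

variable {d n : ℕ} (V : Matrix (Fin d) (Fin n) ℝ)

theorem subSub_transpose_mul_self (S : Finset (Fin n)) :
    subSub (Vᵀ * V) S = (V.submatrix id ((↑) : S → Fin n))ᵀ * V.submatrix id (↑) := by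
  ext a b
  simp [subSub, mul_apply]

theorem det_subSub_insert_erase {S : Finset (Fin n)} {i j : Fin n} (hi : i ∈ S) (hj : j ∉ S) :
    (subSub (Vᵀ * V) (insert j (S.erase i))).det =
      (((V.submatrix id ((↑) : S → Fin n)).updateCol ⟨i, hi⟩ (V.col j))ᵀ *
        (V.submatrix id ((↑) : S → Fin n)).updateCol ⟨i, hi⟩ (V.col j)).det := by
  have hij : i ≠ j := by rintro rfl; exact hj hi
  have hmem (a : Fin n) : a ∈ S ↔ Equiv.swap i j a ∈ insert j (S.erase i) := by
    rcases eq_or_ne a i with rfl | hai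
    · simp [hi]
    rcases eq_or_ne a j with rfl | haj
    · simp [hj, hij]
    · simp [Equiv.swap_apply_of_ne_of_ne hai haj, hai, haj]
  have hcol : (V.submatrix id ((↑) : S → Fin n)).updateCol ⟨i, hi⟩ (V.col j) =
      V.submatrix id (fun a : S => Equiv.swap i j a) := by
    ext r a
    rcases eq_or_ne a ⟨i, hi⟩ with rfl | hai
    · simp
    · have hai' : (a : Fin n) ≠ i := fun h => hai (Subtype.ext h)
      have haj : (a : Fin n) ≠ j := by rintro h; exact hj (h ▸ a.2)
      simp [updateCol_ne hai, Equiv.swap_apply_of_ne_of_ne hai' haj]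
  rw [subSub_transpose_mul_self, ← det_submatrix_equiv_self ((Equiv.swap i j).subtypeEquiv hmem),
    hcol]
  rfl

end Selection

theorem stmt_11_general (d n : ℕ)
    (V : Matrix (Fin d) (Fin n) ℝ) (Shat : Finset (Fin n))
    (hlin : LinearIndependent ℝ (fun i : {x // x ∈ Shat} => (fun a => V a i.1)))
    (X P : Matrix (Fin d) (Fin d) ℝ)
    (hX : X = ∑ i ∈ Shat, vecMulVec (fun a => V a i) (fun a => V a i))
    (hP : IsPseudoInv X P)
    (hloc : ∀ i ∈ Shat, ∀ j ∉ Shat,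
      (subSub (Vᵀ * V) (insert j (Shat.erase i))).det ≤ (subSub (Vᵀ * V) Shat).det) :
    ∀ i ∈ Shat, ∀ j ∉ Shat,
      ((fun a => V a i) ⬝ᵥ ((P * P) *ᵥ fun a => V a i)) *
          ((fun a => V a j) ⬝ᵥ ((1 - P * X) *ᵥ fun a => V a j)) +
        ((fun a => V a j) ⬝ᵥ (P *ᵥ fun a => V a i)) ^ 2 ≤ 1 := by
  intro i hi j hj
  set B := V.submatrix id ((↑) : Shat → Fin n)
  have hB : (Bᵀ * B).PosDef := by
    simpa using PosDef.conjTranspose_mul_self B (mulVec_injective_iff.mpr hlin)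
  have hXB : X = B * Bᵀ := by
    ext a c
    simp [hX, B, mul_apply, vecMulVec_apply, Matrix.sum_apply, ← Finset.sum_coe_sort Shat]
  have hdet := hloc i hi j hj
  rw [det_subSub_insert_erase V hi hj, subSub_transpose_mul_self] at hdet
  rw [hXB] at hP ⊢
  exact pinv_bound_of_det_updateCol_le B hB hP ⟨i, hi⟩ (V.col j) hdet

/-- If `Ŝ` is locally optimal for MESP, then for every `i ∈ Ŝ` and
`j ∉ Ŝ`: `1 ≥ (vᵢᵀ P² vᵢ) · vⱼᵀ(I − PX)vⱼ + (vⱼᵀ P vᵢ)²`, where `X = ∑_{ℓ∈Ŝ} v_ℓ v_ℓᵀ`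
and `P = X†`. -/
theorem stmt_11 (d n s : ℕ) (hs1 : 1 ≤ s) (hsd : s ≤ d)
    (V : Matrix (Fin d) (Fin n) ℝ) (Shat : Finset (Fin n)) (hcard : Shat.card = s)
    (hlin : LinearIndependent ℝ (fun i : {x // x ∈ Shat} => (fun a => V a i.1)))
    (X P : Matrix (Fin d) (Fin d) ℝ)
    (hX : X = ∑ i ∈ Shat, vecMulVec (fun a => V a i) (fun a => V a i))
    (hP : IsPseudoInv X P)
    (hloc : ∀ i ∈ Shat, ∀ j ∉ Shat,
      (subSub (Vᵀ * V) (insert j (Shat.erase i))).det ≤ (subSub (Vᵀ * V) Shat).det) :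
    ∀ i ∈ Shat, ∀ j ∉ Shat,
      ((fun a => V a i) ⬝ᵥ ((P * P) *ᵥ fun a => V a i)) *
          ((fun a => V a j) ⬝ᵥ ((1 - P * X) *ᵥ fun a => V a j)) +
        ((fun a => V a j) ⬝ᵥ (P *ᵥ fun a => V a i)) ^ 2 ≤ 1 :=
  stmt_11_general d n V Shat hlin X P hX hP hloc
end
end
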